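/- For every integer n ≥ 3, every set of C(2n-4, n-2) + 1 points in the plane in general position contains n points in convex position; that is, f(n) ≤ C(2n-4, n-2) + 1. -/

import Mathlib

/-!
Common definitions: points in the plane, general position, distinct x-coordinates,
cups, caps, convex position, and the combinatorial functions from the paper.
-/

open Finset

/-- A point in the Euclidean plane, with `p.1` its x-coordinate and `p.2` its y-coordinate. -/
abbrev Pt : Type := ℝ × ℝ

/-- A set of points is in general position if no three (distinct) of its points are collinear. -/
def GenPos (S : Set Pt) : Prop :=
  ∀ p ∈ S, ∀ q ∈ S, ∀ r ∈ S, p ≠ q → p ≠ r → q ≠ r → ¬ Collinear ℝ ({p, q, r} : Set Pt)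

/-- A set of points has pairwise distinct x-coordinates. -/
def DistinctX (S : Set Pt) : Prop :=
  ∀ p ∈ S, ∀ q ∈ S, p ≠ q → p.1 ≠ q.1

/-- The slope of the segment from `p` to `q`. -/
noncomputable def PtSlope (p q : Pt) : ℝ := (q.2 - p.2) / (q.1 - p.1)

/-- `f 0, f 1, …, f (k-1)` is a `k`-cup in `P`: the points lie in `P`, are listed in
increasing order of x-coordinate, and the slopes of consecutive segments strictly increase. -/
def IsCupSeq (k : ℕ) (P : Set Pt) (f : ℕ → Pt) : Prop :=
  (∀ i, i < k → f i ∈ P) ∧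
  (∀ i j, i < j → j < k → (f i).1 < (f j).1) ∧
  (∀ i, i + 2 < k → PtSlope (f i) (f (i + 1)) < PtSlope (f (i + 1)) (f (i + 2)))

/-- `f 0, f 1, …, f (k-1)` is a `k`-cap in `P`: the points lie in `P`, are listed in
increasing order of x-coordinate, and the slopes of consecutive segments strictly decrease. -/
def IsCapSeq (k : ℕ) (P : Set Pt) (f : ℕ → Pt) : Prop :=
  (∀ i, i < k → f i ∈ P) ∧
  (∀ i j, i < j → j < k → (f i).1 < (f j).1) ∧
  (∀ i, i + 2 < k → PtSlope (f i) (f (i + 1)) > PtSlope (f (i + 1)) (f (i + 2)))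

/-- `P` contains a `k`-cup. -/
def HasCup (k : ℕ) (P : Set Pt) : Prop := ∃ f : ℕ → Pt, IsCupSeq k P f

/-- `P` contains a `k`-cap. -/
def HasCap (k : ℕ) (P : Set Pt) : Prop := ∃ f : ℕ → Pt, IsCapSeq k P f

/-- `S` is `(n, m)`-free: it contains no `n`-cup and no `m`-cap. -/
def IsFree (n m : ℕ) (S : Set Pt) : Prop := ¬ HasCup n S ∧ ¬ HasCap m S

/-- A set of points is in convex position: every point of the set is a vertex (extreme point)
of its convex hull, i.e. no point lies in the convex hull of the others. -/
def ConvexPos (S : Set Pt) : Prop := ∀ p ∈ S, p ∉ convexHull ℝ (S \ {p})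

/-- `S` contains `n` points in convex position. -/
def HasConvexNGon (n : ℕ) (S : Set Pt) : Prop :=
  ∃ T : Finset Pt, ↑T ⊆ S ∧ T.card = n ∧ ConvexPos ↑T

/-- The set of cardinalities of finite planar point sets, in general position with pairwise
distinct x-coordinates, containing no `n`-cup and no `m`-cap.  The Erdős–Szekeres cup–cap
number `f(n, m)` is the greatest element of this set. -/
def CupCapCards (n m : ℕ) : Set ℕ :=
  {N : ℕ | ∃ S : Finset Pt, S.card = N ∧ GenPos ↑S ∧ DistinctX ↑S ∧
    ¬ HasCup n ↑S ∧ ¬ HasCap m ↑S}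

/-- The defining property of the Erdős–Szekeres number `f(n) = N`: `N` is the smallest
positive integer such that every set of `N` points in general position in the plane
contains `n` points in convex position. -/
def IsESNumber (n N : ℕ) : Prop :=
  IsLeast {N : ℕ | 0 < N ∧
    ∀ S : Finset Pt, GenPos ↑S → S.card = N → HasConvexNGon n ↑S} N

/-- The point `r` lies strictly below the (non-vertical) line through `p` and `q`. -/
noncomputable def StrictlyBelow (p q r : Pt) : Prop :=
  r.2 < p.2 + PtSlope p q * (r.1 - p.1)

/-- The point `s ∈ S` is `(m, l)`-good: for every `n ≥ 4` and every finite set `B` of at most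
`n - 2` points such that `S ∪ B` is in general position with pairwise distinct x-coordinates
and contains an `(n-1)`-cup with leftmost point `s` and rightmost point in `B`, the set
`S ∪ B` contains an `l`-cap whose two rightmost points lie in `S`, or an `m`-cup whose two
leftmost points lie in `S`, or `n` points in convex position. -/
def IsGoodPoint (m l : ℕ) (S : Finset Pt) (s : Pt) : Prop :=
  ∀ n : ℕ, 4 ≤ n → ∀ B : Finset Pt, B.card ≤ n - 2 →
    GenPos ↑(S ∪ B) → DistinctX ↑(S ∪ B) →
    (∃ f : ℕ → Pt, IsCupSeq (n - 1) ↑(S ∪ B) f ∧ f 0 = s ∧ f (n - 2) ∈ B) →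
    ((∃ f : ℕ → Pt, IsCapSeq l ↑(S ∪ B) f ∧ f (l - 2) ∈ S ∧ f (l - 1) ∈ S) ∨
     (∃ f : ℕ → Pt, IsCupSeq m ↑(S ∪ B) f ∧ f 0 ∈ S ∧ f 1 ∈ S) ∨
     HasConvexNGon n ↑(S ∪ B))

/-- The weight functions `wᵢ(m, k)` from the paper. -/
def w (i m k : ℕ) : ℕ :=
  if i = 4 then
    Nat.choose (m + k - 6) (k - 2) + Nat.choose (m + k - 7) (k - 3) +
      2 * Nat.choose (m + k - 8) (k - 4)
  else if k < i then 0
  else (i - 1) * Nat.choose (m + k - i - 4) (k - i)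

/-- `g(m, l) = Σ_{i=4}^{∞} wᵢ(m, l) = Σ_{i=4}^{l} wᵢ(m, l)` (the sum is finite since
`wᵢ(m, l) = 0` for `i > l`). -/
def g (m l : ℕ) : ℕ := ∑ i ∈ Finset.Icc 4 l, w i m l

/-!
After a generic shear all x-coordinates are distinct, and cups and caps are in convex position,
so it suffices to show that more than `C(m + k - 4, k - 2)` points contain an `m`-cup or a `k`-cap.
Let `E` be the set of right endpoints of `(m - 1)`-cups. If `S \ E` is large, induction gives a
`k`-cap in it, since an `(m - 1)`-cup there would end outside `E`. Otherwise, by Pascal's rule,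
`E` is large and contains an `m`-cup or a `(k - 1)`-cap; the first point of that cap ends an
`(m - 1)`-cup, and comparing the two slopes at this point (general position excludes equality)
extends either the cup or the cap. Take `m = k = n`.
-/

section Slope

variable {p q r : Pt}

theorem ptSlope_mem_Ioo (h₁ : p.1 < q.1) (h₂ : q.1 < r.1) (h : PtSlope p q < PtSlope q r) :
    PtSlope p r ∈ Set.Ioo (PtSlope p q) (PtSlope q r) := by
  unfold PtSlope at *
  rw [div_lt_div_iff₀ (by linarith) (by linarith)] at h
  constructor
  · rw [div_lt_div_iff₀ (by linarith) (by linarith)]; nlinarith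
  · rw [div_lt_div_iff₀ (by linarith) (by linarith)]; nlinarith

theorem collinear_of_ptSlope_eq (h₁ : p.1 < q.1) (h₂ : q.1 < r.1)
    (h : PtSlope p q = PtSlope q r) : Collinear ℝ ({p, q, r} : Set Pt) := by
  rw [collinear_iff_of_mem (p₀ := p) (by simp)]
  refine ⟨(1, PtSlope p q), ?_⟩
  simp only [Set.mem_insert_iff, Set.mem_singleton_iff, forall_eq_or_imp, forall_eq]
  unfold PtSlope at *
  have hpq : q.1 - p.1 ≠ 0 := by linarith
  rw [div_eq_div_iff hpq (by linarith)] at h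
  refine ⟨⟨0, by simp⟩, ⟨q.1 - p.1, ?_⟩, ⟨r.1 - p.1, ?_⟩⟩ <;>
    ext <;> simp <;> field_simp <;> linarith

theorem intercept_lt_of_lt_ptSlope {t : ℝ} (hx : p.1 < q.1) (ht : t < PtSlope p q) :
    p.2 - t * p.1 < q.2 - t * q.1 := by
  rw [PtSlope, lt_div_iff₀ (by linarith)] at ht
  linarith

theorem intercept_lt_of_ptSlope_lt {t : ℝ} (hx : q.1 < p.1) (ht : PtSlope q p < t) :
    p.2 - t * p.1 < q.2 - t * q.1 := by
  rw [PtSlope, div_lt_iff₀ (by linarith)] at ht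
  linarith

end Slope

theorem notMem_convexHull_of_forall_lt {𝕜 E : Type*} [Field 𝕜] [LinearOrder 𝕜]
    [IsStrictOrderedRing 𝕜] [AddCommGroup E] [Module 𝕜 E] (φ : E →ₗ[𝕜] 𝕜) {s : Set E} {x : E}
    (h : ∀ y ∈ s, φ x < φ y) : x ∉ convexHull 𝕜 s := fun hx =>
  lt_irrefl (φ x) (convexHull_min h ((convex_Ioi (φ x)).linear_preimage φ) hx)

namespace IsCupSeq

variable {n : ℕ} {P Q : Set Pt} {f : ℕ → Pt}

theorem mono (h : IsCupSeq n P f) (hPQ : P ⊆ Q) : IsCupSeq n Q f :=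
  ⟨fun i hi => hPQ (h.1 i hi), h.2.1, h.2.2⟩

theorem ptSlope_lt_succ (h : IsCupSeq n P f) {a b : ℕ} (hab : a < b) (hb : b + 1 < n) :
    PtSlope (f a) (f b) < PtSlope (f b) (f (b + 1)) := by
  induction b with
  | zero => omega
  | succ b ih =>
    rcases (Nat.lt_succ_iff_lt_or_eq.1 hab) with hab | rfl
    · have hx₁ := h.2.1 a b hab (by omega)
      have hx₂ := h.2.1 b (b + 1) (by omega) (by omega)
      exact (ptSlope_mem_Ioo hx₁ hx₂ (ih hab (by omega))).2.trans (h.2.2 b (by omega))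
    · exact h.2.2 a (by omega)

theorem ptSlope_lt (h : IsCupSeq n P f) {a b c : ℕ} (hab : a < b) (hbc : b < c) (hc : c < n) :
    PtSlope (f a) (f b) < PtSlope (f b) (f c) := by
  induction c with
  | zero => omega
  | succ c ih =>
    rcases (Nat.lt_succ_iff_lt_or_eq.1 hbc) with hbc | rfl
    · have hx₁ := h.2.1 b c hbc (by omega)
      have hx₂ := h.2.1 c (c + 1) (by omega) hc
      exact (ih hbc (by omega)).trans
        (ptSlope_mem_Ioo hx₁ hx₂ (h.ptSlope_lt_succ hbc hc)).1
    · exact h.ptSlope_lt_succ hab hc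

theorem card_image_range (h : IsCupSeq n P f) : #((range n).image f) = n := by
  have hmono : StrictMonoOn (fun i => (f i).1) (Set.Iio n) :=
    fun i _ j hj hij => h.2.1 i j hij hj
  rw [card_image_of_injOn, card_range]
  intro i hi j hj hij
  exact hmono.injOn (by simpa using hi) (by simpa using hj) (congrArg Prod.fst hij)

/-- The supporting line at `f j` has a slope `t` separating the slopes of the chords ending at `f j`
from those of the chords starting there. -/
theorem convexPos_image_range (h : IsCupSeq n P f) : ConvexPos ↑((range n).image f) := by
  intro p hp
  obtain ⟨j, hj, rfl⟩ : ∃ j < n, f j = p := by simpa using hp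
  obtain ⟨t, ht_left, ht_right⟩ := Finset.exists_between'
    ((range j).image fun i => PtSlope (f i) (f j)) ((Ioo j n).image fun i => PtSlope (f j) (f i))
    (by simp only [mem_image, mem_range, mem_Ioo]
        rintro _ ⟨i, hi, rfl⟩ _ ⟨k, ⟨hjk, hk⟩, rfl⟩
        exact h.ptSlope_lt hi hjk hk)
  apply notMem_convexHull_of_forall_lt (LinearMap.snd ℝ ℝ ℝ - t • LinearMap.fst ℝ ℝ ℝ)
  rintro _ ⟨hq, hne⟩
  obtain ⟨i, hi, rfl⟩ : ∃ i < n, f i = _ := by simpa using hq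
  simp only [LinearMap.sub_apply, LinearMap.smul_apply, LinearMap.snd_apply, LinearMap.fst_apply,
    smul_eq_mul]
  rcases lt_trichotomy i j with hij | rfl | hji
  · exact intercept_lt_of_ptSlope_lt (h.2.1 i j hij hj)
      (ht_left _ (mem_image_of_mem _ (mem_range.2 hij)))
  · exact absurd rfl hne
  · exact intercept_lt_of_lt_ptSlope (h.2.1 j i hji hi)
      (ht_right _ (mem_image_of_mem _ (mem_Ioo.2 ⟨hji, hi⟩)))

theorem hasConvexNGon (h : IsCupSeq n P f) : HasConvexNGon n P := by
  refine ⟨(range n).image f, ?_, h.card_image_range, h.convexPos_image_range⟩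
  intro x hx
  obtain ⟨i, hi, rfl⟩ : ∃ i < n, f i = x := by simpa using hx
  exact h.1 i hi

theorem snoc (h : IsCupSeq (n + 2) P f) {q : Pt} (hq : q ∈ P) (hx : (f (n + 1)).1 < q.1)
    (hs : PtSlope (f n) (f (n + 1)) < PtSlope (f (n + 1)) q) :
    IsCupSeq (n + 3) P (Function.update f (n + 2) q) := by
  refine ⟨fun i hi => ?_, fun i j hij hj => ?_, fun i hi => ?_⟩
  · rcases Nat.lt_succ_iff_lt_or_eq.1 hi with hi | rfl
    · rw [Function.update_of_ne (by omega)]; exact h.1 i hi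
    · simpa using hq
  · rw [Function.update_of_ne (by omega : i ≠ n + 2)]
    rcases Nat.lt_succ_iff_lt_or_eq.1 hj with hj | rfl
    · rw [Function.update_of_ne (by omega)]; exact h.2.1 i j hij hj
    · rw [Function.update_self]
      rcases Nat.lt_succ_iff_lt_or_eq.1 hij with hij | rfl
      · exact (h.2.1 i (n + 1) hij (by omega)).trans hx
      · exact hx
  · rw [Function.update_of_ne (by omega : i ≠ n + 2),
      Function.update_of_ne (by omega : i + 1 ≠ n + 2)]
    rcases Nat.lt_succ_iff_lt_or_eq.1 hi with hi | hi
    · rw [Function.update_of_ne (by omega)]; exact h.2.2 i hi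
    · obtain rfl : i = n := by omega
      simpa using hs

end IsCupSeq

namespace IsCapSeq

variable {n : ℕ} {P Q : Set Pt} {f : ℕ → Pt}

theorem mono (h : IsCapSeq n P f) (hPQ : P ⊆ Q) : IsCapSeq n Q f :=
  ⟨fun i hi => hPQ (h.1 i hi), h.2.1, h.2.2⟩

theorem cons (h : IsCapSeq (n + 2) P f) {q : Pt} (hq : q ∈ P) (hx : q.1 < (f 0).1)
    (hs : PtSlope (f 0) (f 1) < PtSlope q (f 0)) :
    IsCapSeq (n + 3) P (fun | 0 => q | i + 1 => f i) := by
  refine ⟨fun i hi => ?_, fun i j hij hj => ?_, fun i hi => ?_⟩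
  · rcases i with _ | i
    exacts [hq, h.1 i (by omega)]
  · obtain ⟨j, rfl⟩ : ∃ j', j = j' + 1 := ⟨j - 1, by omega⟩
    rcases i with _ | i
    · rcases Nat.eq_zero_or_pos j with rfl | hj0
      exacts [hx, hx.trans (h.2.1 0 j hj0 (by omega))]
    · exact h.2.1 i j (by omega) (by omega)
  · rcases i with _ | i
    exacts [hs, h.2.2 i (by omega)]

end IsCapSeq

theorem hasCup_or_hasCap_of_isCupSeq_of_isCapSeq {m k : ℕ} {P : Set Pt} {f g : ℕ → Pt}
    (hgp : GenPos P) (hf : IsCupSeq (m + 2) P f) (hg : IsCapSeq (k + 2) P g)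
    (hfg : f (m + 1) = g 0) : HasCup (m + 3) P ∨ HasCap (k + 3) P := by
  have hx₁ : (f m).1 < (f (m + 1)).1 := hf.2.1 m (m + 1) (by omega) (by omega)
  have hx₂ : (f (m + 1)).1 < (g 1).1 := hfg ▸ hg.2.1 0 1 (by omega) (by omega)
  rcases lt_trichotomy (PtSlope (f m) (f (m + 1))) (PtSlope (g 0) (g 1)) with hlt | heq | hgt
  · exact .inl ⟨_, hf.snoc (hg.1 1 (by omega)) hx₂ (hfg ▸ hlt)⟩
  · refine absurd (collinear_of_ptSlope_eq hx₁ hx₂ (hfg ▸ heq)) (hgp _ (hf.1 m (by omega)) _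
      (hf.1 (m + 1) (by omega)) _ (hg.1 1 (by omega)) ?_ ?_ ?_)
    all_goals intro he; have := congrArg Prod.fst he; linarith
  · exact .inr ⟨_, hg.cons (hf.1 m (by omega)) (hfg ▸ hx₁) (hfg ▸ hgt)⟩

theorem GenPos.mono {P Q : Set Pt} (h : GenPos Q) (hPQ : P ⊆ Q) : GenPos P :=
  fun p hp q hq r hr => h p (hPQ hp) q (hPQ hq) r (hPQ hr)

theorem DistinctX.mono {P Q : Set Pt} (h : DistinctX Q) (hPQ : P ⊆ Q) : DistinctX P :=
  fun p hp q hq => h p (hPQ hp) q (hPQ hq)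

theorem HasCup.mono {n : ℕ} {P Q : Set Pt} (h : HasCup n P) (hPQ : P ⊆ Q) : HasCup n Q :=
  let ⟨f, hf⟩ := h; ⟨f, hf.mono hPQ⟩

theorem HasCap.mono {n : ℕ} {P Q : Set Pt} (h : HasCap n P) (hPQ : P ⊆ Q) : HasCap n Q :=
  let ⟨f, hf⟩ := h; ⟨f, hf.mono hPQ⟩

theorem HasCup.hasCap_of_le_two {n : ℕ} {P : Set Pt} (h : HasCup n P) (hn : n ≤ 2) :
    HasCap n P :=
  let ⟨f, hf⟩ := h; ⟨f, hf.1, hf.2.1, fun i hi => absurd hi (by omega)⟩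

theorem hasCup_of_le_two {n : ℕ} {S : Finset Pt} (hdx : DistinctX ↑S) (hn : n ≤ 2)
    (hS : n ≤ #S) : HasCup n ↑S := by
  rcases (by omega : n = 0 ∨ n = 1 ∨ n = 2) with rfl | rfl | rfl
  · exact ⟨fun _ => 0, by simp [IsCupSeq]⟩
  · obtain ⟨p, hp⟩ := S.card_pos.1 hS
    exact ⟨fun _ => p, fun _ _ => hp, fun i j hij hj => by omega, fun i hi => by omega⟩
  · obtain ⟨p, hp, q, hq, hpq⟩ := one_lt_card.1 hS
    wlog hx : p.1 < q.1 generalizing p q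
    · exact this q hq p hp hpq.symm ((hdx p hp q hq hpq).lt_or_gt.resolve_left hx)
    refine ⟨fun | 0 => p | _ => q, fun i hi => ?_, fun i j hij hj => ?_, fun i hi => by omega⟩
    · rcases i with _ | i
      exacts [hp, hq]
    · obtain ⟨rfl, rfl⟩ : i = 0 ∧ j = 1 := by omega
      exact hx

theorem hasCup_or_hasCap (m k : ℕ) (S : Finset Pt) (hgp : GenPos ↑S) (hdx : DistinctX ↑S)
    (hS : (m + k - 4).choose (k - 2) < #S) : HasCup m ↑S ∨ HasCap k ↑S := by
  classical
  by_cases hm : m ≤ 2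
  · refine .inl (hasCup_of_le_two hdx hm ?_)
    rcases (by omega : m ≤ 1 ∨ m = 2) with hm | rfl
    · omega
    · rw [show 2 + k - 4 = k - 2 by omega, Nat.choose_self] at hS
      omega
  by_cases hk : k ≤ 2
  · refine .inr ((hasCup_of_le_two hdx hk ?_).hasCap_of_le_two hk)
    simp only [show k - 2 = 0 by omega, Nat.choose_zero_right] at hS
    omega
  obtain ⟨m, rfl⟩ : ∃ m', m = m' + 3 := ⟨m - 3, by omega⟩
  obtain ⟨k, rfl⟩ : ∃ k', k = k' + 3 := ⟨k - 3, by omega⟩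
  set E := S.filter fun p => ∃ f, IsCupSeq (m + 2) ↑S f ∧ f (m + 1) = p
  have hES : E ⊆ S := filter_subset _ _
  have hES' : (↑E : Set Pt) ⊆ ↑S := coe_subset.2 hES
  have hpascal :
      (m + k + 2).choose (k + 1) = (m + k + 1).choose k + (m + k + 1).choose (k + 1) :=
    Nat.choose_succ_succ _ _
  rcases lt_or_ge ((m + k + 1).choose (k + 1)) #(S \ E) with hSE | hSE
  · rcases hasCup_or_hasCap (m + 2) (k + 3) (S \ E) (hgp.mono (by simp)) (hdx.mono (by simp))
      (by simpa [show m + 2 + (k + 3) - 4 = m + k + 1 by omega] using hSE) with ⟨f, hf⟩ | hcap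
    · have hlast : f (m + 1) ∈ S \ E := hf.1 (m + 1) (by omega)
      exact absurd (mem_filter.2 ⟨(mem_sdiff.1 hlast).1, f, hf.mono (by simp), rfl⟩)
        (mem_sdiff.1 hlast).2
    · exact .inr (hcap.mono (by simp))
  · have hE : (m + k + 1).choose k < #E := by
      have := card_sdiff_add_card_eq_card hES
      simp only [show m + 3 + (k + 3) - 4 = m + k + 2 by omega, show k + 3 - 2 = k + 1 by omega]
        at hS
      omega
    rcases hasCup_or_hasCap (m + 3) (k + 2) E (hgp.mono hES') (hdx.mono hES')
      (by simpa [show m + 3 + (k + 2) - 4 = m + k + 1 by omega] using hE) with hcup | ⟨g, hg⟩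
    · exact .inl (hcup.mono hES')
    · obtain ⟨-, f, hf, hfg⟩ := mem_filter.1 (hg.1 0 (by omega))
      exact hasCup_or_hasCap_of_isCupSeq_of_isCapSeq hgp hf (hg.mono hES') hfg
termination_by m + k

theorem GenPos.image {S : Set Pt} (h : GenPos S) (e : Pt ≃ₗ[ℝ] Pt) : GenPos (e '' S) := by
  rintro _ ⟨p, hp, rfl⟩ _ ⟨q, hq, rfl⟩ _ ⟨r, hr, rfl⟩ hpq hpr hqr hcol
  have hind : AffineIndependent ℝ ![p, q, r] := affineIndependent_iff_not_collinear_set.2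
    (h p hp q hq r hr (ne_of_apply_ne e hpq) (ne_of_apply_ne e hpr) (ne_of_apply_ne e hqr))
  refine affineIndependent_iff_not_collinear_set.1 ?_ hcol
  have := hind.map' e.toAffineEquiv.toAffineMap e.injective
  rwa [← FinVec.map_eq] at this

theorem ConvexPos.image {S : Set Pt} (h : ConvexPos S) (e : Pt ≃ₗ[ℝ] Pt) :
    ConvexPos (e '' S) := by
  rintro _ ⟨p, hp, rfl⟩ hmem
  rw [← Set.image_singleton, ← Set.image_sdiff e.injective, ← LinearEquiv.coe_coe,
    ← LinearMap.image_convexHull] at hmem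
  exact h p hp (e.injective.mem_set_image.1 hmem)

theorem HasConvexNGon.of_image {n : ℕ} {S : Set Pt} (e : Pt ≃ₗ[ℝ] Pt)
    (h : HasConvexNGon n (e '' S)) : HasConvexNGon n S := by
  classical
  obtain ⟨T, hTS, hT, hconv⟩ := h
  refine ⟨T.image e.symm, ?_, by rw [card_image_of_injective _ e.symm.injective, hT], ?_⟩
  · rintro _ hx
    obtain ⟨x, hx', rfl⟩ := Finset.mem_image.1 (mem_coe.1 hx)
    obtain ⟨y, hy, rfl⟩ := hTS hx'
    simpa using hy
  · rw [coe_image]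
    exact hconv.image e.symm

noncomputable def shearX (c : ℝ) : Pt ≃ₗ[ℝ] Pt where
  toFun p := (p.1 + c * p.2, p.2)
  invFun p := (p.1 - c * p.2, p.2)
  map_add' p q := by ext <;> simp only [Prod.fst_add, Prod.snd_add]; ring
  map_smul' a p := by
    ext <;> simp only [Prod.smul_fst, Prod.smul_snd, smul_eq_mul, RingHom.id_apply]; ring
  left_inv p := by simp
  right_inv p := by simp

/-- Only finitely many shears can merge the x-coordinates of two points of `S`. -/
theorem exists_distinctX_image_shearX (S : Finset Pt) : ∃ c, DistinctX (shearX c '' ↑S) := by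
  obtain ⟨c, hc⟩ := Infinite.exists_notMem_finset
    ((S ×ˢ S).image fun pq : Pt × Pt => (pq.2.1 - pq.1.1) / (pq.1.2 - pq.2.2))
  refine ⟨c, ?_⟩
  rintro _ ⟨p, hp, rfl⟩ _ ⟨q, hq, rfl⟩ hne heq
  change p.1 + c * p.2 = q.1 + c * q.2 at heq
  by_cases hy : p.2 = q.2
  · exact hne (congrArg _ (Prod.ext (by rw [hy] at heq; linarith) hy))
  · refine hc (mem_image.2 ⟨(p, q), mem_product.2 ⟨hp, hq⟩, ?_⟩)
    field_simp [sub_ne_zero.2 hy]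
    linarith

def negY : Pt ≃ₗ[ℝ] Pt := (LinearEquiv.refl ℝ ℝ).prodCongr (LinearEquiv.neg ℝ)

theorem ptSlope_negY (p q : Pt) : PtSlope (negY p) (negY q) = -PtSlope p q := by
  simp only [PtSlope, negY, LinearEquiv.prodCongr_apply, LinearEquiv.refl_apply,
    LinearEquiv.neg_apply, neg_sub_neg, ← neg_div, neg_sub]

theorem IsCapSeq.isCupSeq_negY {n : ℕ} {P : Set Pt} {f : ℕ → Pt} (h : IsCapSeq n P f) :
    IsCupSeq n (negY '' P) (negY ∘ f) := by
  refine ⟨fun i hi => Set.mem_image_of_mem _ (h.1 i hi), h.2.1, fun i hi => ?_⟩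
  simpa only [Function.comp_apply, ptSlope_negY, neg_lt_neg_iff] using h.2.2 i hi

theorem HasCup.hasConvexNGon {n : ℕ} {P : Set Pt} (h : HasCup n P) : HasConvexNGon n P :=
  let ⟨_, hf⟩ := h; hf.hasConvexNGon

theorem HasCap.hasConvexNGon {n : ℕ} {P : Set Pt} (h : HasCap n P) : HasConvexNGon n P :=
  let ⟨_, hf⟩ := h; hf.isCupSeq_negY.hasConvexNGon.of_image negY

theorem hasConvexNGon_of_choose_lt_card {n : ℕ} {S : Finset Pt} (hgp : GenPos ↑S)
    (hS : (2 * n - 4).choose (n - 2) < #S) : HasConvexNGon n ↑S := by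
  classical
  obtain ⟨c, hc⟩ := exists_distinctX_image_shearX S
  apply HasConvexNGon.of_image (shearX c)
  rw [← coe_image] at hc ⊢
  refine (hasCup_or_hasCap n n _ (by simpa using hgp.image (shearX c)) hc ?_).elim
    HasCup.hasConvexNGon HasCap.hasConvexNGon
  rwa [card_image_of_injective _ (shearX c).injective, show n + n - 4 = 2 * n - 4 by omega]

theorem stmt_2_general (n : ℕ) (fn : ℕ) (hfn : IsESNumber n fn) :
    fn ≤ Nat.choose (2 * n - 4) (n - 2) + 1 ∧
      ∀ S : Finset Pt, GenPos ↑S → S.card = Nat.choose (2 * n - 4) (n - 2) + 1 →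
        HasConvexNGon n ↑S := by
  have key : ∀ S : Finset Pt, GenPos ↑S → S.card = Nat.choose (2 * n - 4) (n - 2) + 1 →
      HasConvexNGon n ↑S := fun S hgp hS => hasConvexNGon_of_choose_lt_card hgp (by omega)
  exact ⟨hfn.2 ⟨Nat.succ_pos _, key⟩, key⟩

/-- For every `n ≥ 3`, every set of `C(2n-4, n-2) + 1` points in general
position in the plane contains `n` points in convex position; that is,
`f(n) ≤ C(2n-4, n-2) + 1`. -/
theorem stmt_2 (n : ℕ) (hn : 3 ≤ n) (fn : ℕ) (hfn : IsESNumber n fn) :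
    fn ≤ Nat.choose (2 * n - 4) (n - 2) + 1 ∧
      ∀ S : Finset Pt, GenPos ↑S → S.card = Nat.choose (2 * n - 4) (n - 2) + 1 →
        HasConvexNGon n ↑S :=
  stmt_2_general n fn hfn
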